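/- Let d ≥ 1, let U ⊆ ℝ^{d+1} be open, let p ∈ U, and let f : U → ℝ be (Fréchet) differentiable at p. Assume that for every timelike future-directed vector v ∈ ℝ^{d+1} (η(v, v) < 0 and v₀ > 0) there exists s > 0 such that the segment {p + t v : t ∈ [−s, s]} lies in U and the map t ↦ f(p + t v) is nondecreasing on [−s, s]. Then the η-gradient ∇_η f(p) := (−∂₀f(p), ∂₁f(p), …, ∂_d f(p)), characterized by η(∇_η f(p), u) = Df_p(u) for all u ∈ ℝ^{d+1}, is either zero or causal and past directed (η(∇_η f(p), ∇_η f(p)) ≤ 0 and its 0-th component is negative). -/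

import Mathlib

open Finset Set

/-- The Minkowski bilinear form on `ℝ^{d+1}`:
`η(v, w) = −v₀w₀ + Σ_{i=1}^d vᵢwᵢ`. -/
def minkowski (d : ℕ) (v w : EuclideanSpace ℝ (Fin (d + 1))) : ℝ :=
  (∑ i, v i * w i) - 2 * v 0 * w 0

/-! Since `f` increases along every future-directed timelike `v`, `η(g, v) = Df v ≥ 0`.
Writing `g = (g₀, ḡ)`, the vectors `(1, t ḡ)` are future-directed timelike exactly when
`t² |ḡ|² < 1`, and letting `t` approach `-1 / |ḡ|` gives `-g₀ ≥ |ḡ|`: so `g` is zero or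
past-directed causal. -/

theorem HasFDerivAt.nonneg_apply_of_monotoneOn_Icc {E : Type*} [NormedAddCommGroup E]
    [NormedSpace ℝ E] {f : E → ℝ} {f' : E →L[ℝ] ℝ} {p v : E} {s : ℝ}
    (hf : HasFDerivAt f f' p) (hs : 0 < s)
    (hmono : MonotoneOn (fun t : ℝ => f (p + t • v)) (Icc (-s) s)) : 0 ≤ f' v := by
  have hline : HasDerivAt (fun t : ℝ => p + t • v) v 0 := by
    simpa using ((hasDerivAt_id (0 : ℝ)).smul_const v).const_add p
  have hcomp : HasDerivAt (fun t : ℝ => f (p + t • v)) (f' v) 0 :=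
    (by simpa using hf : HasFDerivAt f f' (p + (0 : ℝ) • v)).comp_hasDerivAt 0 hline
  have hacc : AccPt (0 : ℝ) (Filter.principal (Icc (-s) s)) :=
    (uniqueDiffWithinAt_of_mem_nhds (𝕜 := ℝ) (Icc_mem_nhds (neg_neg_iff_pos.mpr hs) hs)).accPt
  exact hcomp.hasDerivWithinAt.nonneg_of_monotoneOn hacc hmono

theorem Real.sqrt_le_of_forall_sq_mul_lt_one {a B : ℝ}
    (h : ∀ t : ℝ, t ^ 2 * B < 1 → 0 ≤ a + t * B) : √B ≤ a := by
  have ha : 0 ≤ a := by simpa using h 0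
  refine le_of_forall_lt_imp_le_of_dense fun x hx => ?_
  rcases lt_or_ge x 0 with hx0 | hx0
  · linarith
  have hxB : x ^ 2 < B := (Real.lt_sqrt hx0).mp hx
  have hB : 0 < B := (sq_nonneg x).trans_lt hxB
  -- `t = -x / B` makes `a + t B = a - x`
  have := h (-x / B) (by field_simp; simpa using hxB)
  field_simp at this
  linarith

namespace minkowski

variable {d : ℕ}

theorem eq_sum_succ_sub (v w : EuclideanSpace ℝ (Fin (d + 1))) :
    minkowski d v w = ∑ i : Fin d, v i.succ * w i.succ - v 0 * w 0 := by
  simp only [minkowski, Fin.sum_univ_succ]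
  ring

theorem exists_timelike_future_apply_eq (g : EuclideanSpace ℝ (Fin (d + 1))) {t : ℝ}
    (ht : t ^ 2 * ∑ i : Fin d, g i.succ ^ 2 < 1) :
    ∃ v, minkowski d v v < 0 ∧ 0 < v 0 ∧
      minkowski d g v = -g 0 + t * ∑ i : Fin d, g i.succ ^ 2 := by
  refine ⟨WithLp.toLp 2 (Fin.cons 1 fun i => t * g i.succ), ?_, by simp, ?_⟩
  · rw [eq_sum_succ_sub]
    simp only [Fin.cons_succ, Fin.cons_zero]
    have : ∑ i : Fin d, t * g i.succ * (t * g i.succ) = t ^ 2 * ∑ i : Fin d, g i.succ ^ 2 := by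
      rw [mul_sum]
      exact sum_congr rfl fun i _ => by ring
    linarith
  · rw [eq_sum_succ_sub]
    simp only [Fin.cons_succ, Fin.cons_zero]
    have : ∑ i : Fin d, g i.succ * (t * g i.succ) = t * ∑ i : Fin d, g i.succ ^ 2 := by
      rw [mul_sum]
      exact sum_congr rfl fun i _ => by ring
    linarith

theorem eq_zero_or_causal_past_of_nonneg {g : EuclideanSpace ℝ (Fin (d + 1))}
    (h : ∀ v, minkowski d v v < 0 → 0 < v 0 → 0 ≤ minkowski d g v) :
    g = 0 ∨ (minkowski d g g ≤ 0 ∧ g 0 < 0) := by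
  set B := ∑ i : Fin d, g i.succ ^ 2 with hB
  have hB0 : 0 ≤ B := sum_nonneg fun i _ => sq_nonneg _
  have hsqrt : √B ≤ -g 0 := Real.sqrt_le_of_forall_sq_mul_lt_one fun t ht => by
    obtain ⟨v, hvv, hv0, hgv⟩ := exists_timelike_future_apply_eq g ht
    exact hgv ▸ h v hvv hv0
  have hgg : minkowski d g g = B - g 0 ^ 2 := by
    rw [eq_sum_succ_sub, hB]
    simp only [sq]
  rcases (Real.sqrt_nonneg B |>.trans hsqrt).lt_or_eq with hg0 | hg0
  · exact Or.inr ⟨by nlinarith [(Real.sqrt_le_left hg0.le).mp hsqrt], by linarith⟩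
  · left
    have hB_zero : B = 0 :=
      (Real.sqrt_eq_zero hB0).mp (le_antisymm (hg0 ▸ hsqrt) (Real.sqrt_nonneg B))
    have hspatial : ∀ i : Fin d, g i.succ = 0 := fun i =>
      (pow_eq_zero_iff two_ne_zero).mp <|
        (sum_eq_zero_iff_of_nonneg fun j _ => sq_nonneg _).mp hB_zero i (mem_univ i)
    ext i
    refine Fin.cases ?_ (fun i => ?_) i
    · simpa using hg0.symm
    · simpa using hspatial i

end minkowski

theorem causal_function_gradient_general
    (d : ℕ) (U : Set (EuclideanSpace ℝ (Fin (d + 1))))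
    (p : EuclideanSpace ℝ (Fin (d + 1)))
    (f : EuclideanSpace ℝ (Fin (d + 1)) → ℝ)
    (Df : EuclideanSpace ℝ (Fin (d + 1)) →L[ℝ] ℝ)
    (hdiff : HasFDerivAt f Df p)
    (hmono : ∀ v : EuclideanSpace ℝ (Fin (d + 1)),
      minkowski d v v < 0 → 0 < v 0 → ∃ s : ℝ, 0 < s ∧
        (∀ t ∈ Icc (-s) s, p + t • v ∈ U) ∧
        MonotoneOn (fun t : ℝ => f (p + t • v)) (Icc (-s) s))
    (g : EuclideanSpace ℝ (Fin (d + 1)))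
    (hg : ∀ u : EuclideanSpace ℝ (Fin (d + 1)), minkowski d g u = Df u) :
    g = 0 ∨ (minkowski d g g ≤ 0 ∧ g 0 < 0) := by
  refine minkowski.eq_zero_or_causal_past_of_nonneg fun v hvv hv0 => ?_
  obtain ⟨s, hs, -, hmono_v⟩ := hmono v hvv hv0
  exact hg v ▸ hdiff.nonneg_apply_of_monotoneOn_Icc hs hmono_v

/-- If `f` is differentiable at `p` and nondecreasing along every timelike
future-directed direction near `p`, then the `η`-gradient of `f` at `p` (i.e. the vector
`g` with `η(g, u) = Df_p(u)` for all `u`) is zero or causal and past directed. -/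
theorem causal_function_gradient
    (d : ℕ) (hd : 1 ≤ d) (U : Set (EuclideanSpace ℝ (Fin (d + 1)))) (hU : IsOpen U)
    (p : EuclideanSpace ℝ (Fin (d + 1))) (hp : p ∈ U)
    (f : EuclideanSpace ℝ (Fin (d + 1)) → ℝ)
    (Df : EuclideanSpace ℝ (Fin (d + 1)) →L[ℝ] ℝ)
    (hdiff : HasFDerivAt f Df p)
    (hmono : ∀ v : EuclideanSpace ℝ (Fin (d + 1)),
      minkowski d v v < 0 → 0 < v 0 → ∃ s : ℝ, 0 < s ∧
        (∀ t ∈ Icc (-s) s, p + t • v ∈ U) ∧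
        MonotoneOn (fun t : ℝ => f (p + t • v)) (Icc (-s) s))
    (g : EuclideanSpace ℝ (Fin (d + 1)))
    (hg : ∀ u : EuclideanSpace ℝ (Fin (d + 1)), minkowski d g u = Df u) :
    g = 0 ∨ (minkowski d g g ≤ 0 ∧ g 0 < 0) :=
  causal_function_gradient_general d U p f Df hdiff hmono g hg
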